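/- Let V : Θ → ℝ be continuous. A distribution H ∈ ℋ maximizes ∫ V dH over ℋ if and only if for almost all p ∈ [0,1], H^{-1}(p) maximizes V on the interval [H̄^{-1}(p), H̲^{-1}(p)]. -/

import Mathlib

open MeasureTheory Set Filter Topology

noncomputable section

/-- A CDF on `[a,b]`: nondecreasing, right-continuous, `0` below `a`, `1` from `b` on. -/
def IsCDF (a b : ℝ) (G : ℝ → ℝ) : Prop :=
  Monotone G ∧ (∀ x : ℝ, ContinuousWithinAt G (Set.Ici x) x) ∧
    (∀ x : ℝ, x < a → G x = 0) ∧ (∀ x : ℝ, b ≤ x → G x = 1)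

/-- The set of `q`-quantiles of `G` on `[a,b]`. -/
def QSet (a b q : ℝ) (G : ℝ → ℝ) : Set ℝ :=
  {x | x ∈ Set.Icc a b ∧ Function.leftLim G x ≤ q ∧ q ≤ G x}

/-- Generalized inverse `G⁻¹(p) = inf {θ ∈ [a,b] : G θ ≥ p}`. -/
def ginv (a b : ℝ) (G : ℝ → ℝ) (p : ℝ) : ℝ :=
  sInf {θ | θ ∈ Set.Icc a b ∧ p ≤ G θ}

namespace Aux16

lemma cdf_nonneg {a b : ℝ} {F : ℝ → ℝ} (hF : IsCDF a b F) (x : ℝ) : 0 ≤ F x := by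
  have h := hF.2.2.1 (min x a - 1) (by nlinarith [min_le_right x a])
  calc (0:ℝ) = F (min x a - 1) := h.symm
    _ ≤ F x := hF.1 (by nlinarith [min_le_left x a])

lemma cdf_le_one {a b : ℝ} {F : ℝ → ℝ} (hF : IsCDF a b F) (x : ℝ) : F x ≤ 1 := by
  have h := hF.2.2.2 (max x b) (le_max_right _ _)
  calc F x ≤ F (max x b) := hF.1 (le_max_left _ _)
    _ = 1 := h

lemma ginv_set_nonempty {a b : ℝ} {G : ℝ → ℝ} (hab : a ≤ b) (hG : IsCDF a b G) {p : ℝ}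
    (hp : p ≤ 1) : {θ | θ ∈ Set.Icc a b ∧ p ≤ G θ}.Nonempty :=
  ⟨b, ⟨hab, le_rfl⟩, by rw [hG.2.2.2 b le_rfl]; exact hp⟩

lemma ginv_set_bdd {a b p : ℝ} {G : ℝ → ℝ} : BddBelow {θ | θ ∈ Set.Icc a b ∧ p ≤ G θ} :=
  ⟨a, fun _ hθ => hθ.1.1⟩

lemma ginv_mem {a b : ℝ} {G : ℝ → ℝ} (hab : a ≤ b) (hG : IsCDF a b G) {p : ℝ}
    (hp : p ≤ 1) : ginv a b G p ∈ Set.Icc a b := by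
  constructor
  · exact le_csInf (ginv_set_nonempty hab hG hp) fun θ hθ => hθ.1.1
  · exact csInf_le ginv_set_bdd ⟨⟨hab, le_rfl⟩, by rw [hG.2.2.2 b le_rfl]; exact hp⟩

lemma ginv_le {a b : ℝ} {G : ℝ → ℝ} {p x : ℝ} (hx : x ∈ Set.Icc a b) (hpx : p ≤ G x) :
    ginv a b G p ≤ x := csInf_le ginv_set_bdd ⟨hx, hpx⟩

lemma le_apply_ginv {a b : ℝ} {G : ℝ → ℝ} (hab : a ≤ b) (hG : IsCDF a b G) {p : ℝ}
    (hp : p ≤ 1) : p ≤ G (ginv a b G p) := by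
  set S := {θ | θ ∈ Set.Icc a b ∧ p ≤ G θ} with hS
  have hne : S.Nonempty := ginv_set_nonempty hab hG hp
  have hbdd : BddBelow S := ginv_set_bdd
  have hcl : sInf S ∈ closure S := csInf_mem_closure hne hbdd
  have hsub : S ⊆ Set.Ici (sInf S) := fun θ hθ => csInf_le hbdd hθ
  have hcont : ContinuousWithinAt G S (sInf S) := (hG.2.1 (sInf S)).mono hsub
  have hnb : (nhdsWithin (sInf S) S).NeBot := mem_closure_iff_nhdsWithin_neBot.1 hcl
  show p ≤ G (sInf S)
  exact ge_of_tendsto hcont.tendsto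
    (eventually_nhdsWithin_of_forall (fun θ (hθ : θ ∈ S) => hθ.2))

lemma ginv_anti {a b : ℝ} {G₁ G₂ : ℝ → ℝ} (hab : a ≤ b) (hG₁ : IsCDF a b G₁)
    (h : ∀ x, G₁ x ≤ G₂ x) {p : ℝ} (hp : p ≤ 1) :
    ginv a b G₂ p ≤ ginv a b G₁ p := by
  apply csInf_le_csInf ginv_set_bdd (ginv_set_nonempty hab hG₁ hp)
  exact fun θ hθ => ⟨hθ.1, hθ.2.trans (h θ)⟩

lemma ginv_mono {a b : ℝ} {G : ℝ → ℝ} (hab : a ≤ b) (hG : IsCDF a b G) {p p' : ℝ}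
    (hp : p ≤ p') (hp' : p' ≤ 1) : ginv a b G p ≤ ginv a b G p' := by
  apply csInf_le_csInf ginv_set_bdd (ginv_set_nonempty hab hG hp')
  exact fun θ hθ => ⟨hθ.1, hp.trans hθ.2⟩

section Envelopes

variable {a b q : ℝ} {F : ℝ → ℝ}

lemma isCDF_Hu (hq : q ∈ Set.Ioo (0:ℝ) 1) (hF : IsCDF a b F) :
    IsCDF a b (fun z => min (F z / q) 1) := by
  refine ⟨fun x y hxy => min_le_min ((div_le_div_iff_of_pos_right hq.1).mpr (hF.1 hxy)) le_rfl, ?_, ?_, ?_⟩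
  · exact fun x => ((hF.2.1 x).div_const q).min continuousWithinAt_const
  · intro x hx; simp [hF.2.2.1 x hx, hq.1.le]
  · intro x hx
    have h1 : (1:ℝ) ≤ F x / q := by
      rw [hF.2.2.2 x hx]; rw [le_div_iff₀ hq.1]; linarith [hq.2]
    show (F x / q ⊓ 1) = 1
    simp [min_eq_right, h1]

lemma isCDF_Hl (hq : q ∈ Set.Ioo (0:ℝ) 1) (hF : IsCDF a b F) :
    IsCDF a b (fun z => max 0 ((F z - q) / (1 - q))) := by
  have h1q : (0:ℝ) < 1 - q := by linarith [hq.2]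
  refine ⟨fun x y hxy => max_le_max le_rfl ((div_le_div_iff_of_pos_right h1q).mpr (by linarith [hF.1 hxy])),
    ?_, ?_, ?_⟩
  · exact fun x =>
      continuousWithinAt_const.max (((hF.2.1 x).sub continuousWithinAt_const).div_const _)
  · intro x hx
    have : (F x - q) / (1 - q) ≤ 0 :=
      div_nonpos_of_nonpos_of_nonneg (by rw [hF.2.2.1 x hx]; linarith [hq.1]) h1q.le
    simp [max_eq_left this]
  · intro x hx
    show (0 ⊔ (F x - q) / (1 - q)) = 1
    rw [hF.2.2.2 x hx]
    rw [max_eq_right]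
    · field_simp
    · positivity

lemma Hl_le_Hu (hq : q ∈ Set.Ioo (0:ℝ) 1) (hF : IsCDF a b F) (x : ℝ) :
    max 0 ((F x - q) / (1 - q)) ≤ min (F x / q) 1 := by
  have h1q : (0:ℝ) < 1 - q := by linarith [hq.2]
  have h0 := cdf_nonneg hF x
  have h1 := cdf_le_one hF x
  apply max_le
  · exact le_min (div_nonneg h0 hq.1.le) zero_le_one
  · apply le_min
    · rw [div_le_div_iff₀ h1q hq.1]
      nlinarith [sq_nonneg (F x - q), mul_nonneg h0 (by linarith : (0:ℝ) ≤ 1 - F x)]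
    · rw [div_le_one h1q]; linarith

end Envelopes

/-- inverse CDF of a monotone selection `Y`. -/
def Hinv (Y : ℝ → ℝ) (θ : ℝ) : ℝ := sSup {p | p ∈ Set.Icc (0:ℝ) 1 ∧ Y p ≤ θ}

variable {a b : ℝ} {Y : ℝ → ℝ}

lemma Hinv_bddAbove {θ : ℝ} : BddAbove {p | p ∈ Set.Icc (0:ℝ) 1 ∧ Y p ≤ θ} :=
  ⟨1, fun _ hp => hp.1.2⟩

lemma Hinv_nonneg (θ : ℝ) : 0 ≤ Hinv Y θ := Real.sSup_nonneg fun _ hp => hp.1.1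

lemma Hinv_le_one (θ : ℝ) : Hinv Y θ ≤ 1 := Real.sSup_le (fun _ hp => hp.1.2) zero_le_one

lemma Hinv_mono : Monotone (Hinv Y) := by
  intro θ θ' h
  rcases Set.eq_empty_or_nonempty {p | p ∈ Set.Icc (0:ℝ) 1 ∧ Y p ≤ θ} with he | hne
  · rw [Hinv, he, Real.sSup_empty]; exact Hinv_nonneg θ'
  · exact csSup_le_csSup Hinv_bddAbove hne fun p hp => ⟨hp.1, hp.2.trans h⟩

lemma le_Hinv {p θ : ℝ} (hp0 : 0 < p) (hp1 : p ≤ 1)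
    (h : ∀ r, 0 ≤ r → r < p → Y r ≤ θ) : p ≤ Hinv Y θ := by
  have hsub : Set.Ico (0:ℝ) p ⊆ {p | p ∈ Set.Icc (0:ℝ) 1 ∧ Y p ≤ θ} :=
    fun r hr => ⟨⟨hr.1, le_of_lt (lt_of_lt_of_le hr.2 hp1)⟩, h r hr.1 hr.2⟩
  calc p = sSup (Set.Ico (0:ℝ) p) := (csSup_Ico hp0).symm
    _ ≤ Hinv Y θ := csSup_le_csSup Hinv_bddAbove ⟨0, by simp [hp0]⟩ hsub

lemma Hinv_rle (hY : Monotone Y) {p θ r : ℝ} (h : p ≤ Hinv Y θ) (hr0 : 0 ≤ r)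
    (hrp : r < p) : Y r ≤ θ := by
  by_contra hc
  push_neg at hc
  have : Hinv Y θ ≤ r := by
    apply Real.sSup_le _ hr0
    intro s hs
    by_contra hsr
    push_neg at hsr
    exact absurd (le_trans (hY hsr.le) hs.2) (not_le.mpr hc)
  linarith

lemma isCDF_Hinv (hY : Monotone Y) (hmem : ∀ p, Y p ∈ Set.Icc a b) :
    IsCDF a b (Hinv Y) := by
  refine ⟨Hinv_mono, ?_, ?_, ?_⟩
  · -- right continuity
    intro x
    rw [← continuousWithinAt_diff_self]
    have : Set.Ici x \ {x} = Set.Ioi x := Ici_sdiff_left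
    rw [this]
    rw [Hinv_mono.continuousWithinAt_Ioi_iff_rightLim_eq]
    rw [Hinv_mono.rightLim_eq_sInf]
    apply le_antisymm
    · by_contra hc
      push_neg at hc
      set L := sInf (Hinv Y '' Set.Ioi x) with hL
      have hLle : ∀ θ, x < θ → L ≤ Hinv Y θ := fun θ hθ =>
        csInf_le ⟨0, fun u ⟨θ', _, hθ'⟩ => hθ' ▸ Hinv_nonneg θ'⟩ ⟨θ, hθ, rfl⟩
      have hL1 : L ≤ 1 := le_trans (hLle (x+1) (by linarith)) (Hinv_le_one _)
      set p := (Hinv Y x + L) / 2 with hp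
      have hp0 : 0 < p := by have := Hinv_nonneg (Y := Y) x; simp [hp]; linarith
      have hp1 : p ≤ 1 := by simp [hp]; linarith [Hinv_le_one (Y := Y) x]
      have hpL : p < L := by simp [hp]; linarith
      have hYx : ∀ r, 0 ≤ r → r < p → Y r ≤ x := by
        intro r hr0 hrp
        by_contra hcr
        push_neg at hcr
        have h2 : Y r ≤ (x + Y r) / 2 :=
          Hinv_rle hY (le_trans hpL.le (hLle _ (by linarith))) hr0 hrp
        linarith
      have := le_Hinv hp0 hp1 hYx
      simp [hp] at this
      linarith
    · apply le_csInf ((Set.nonempty_Ioi (a := x)).image _)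
      rintro u ⟨θ, hθ, rfl⟩
      exact Hinv_mono (le_of_lt hθ)
  · intro x hx
    have he : {p | p ∈ Set.Icc (0:ℝ) 1 ∧ Y p ≤ x} = ∅ := by
      ext p; simp only [Set.mem_setOf_eq, Set.mem_empty_iff_false, iff_false, not_and]
      intro _ h; exact absurd (lt_of_le_of_lt h hx) (not_lt.mpr (hmem p).1)
    rw [Hinv, he, Real.sSup_empty]
  · intro x hx
    have he : {p | p ∈ Set.Icc (0:ℝ) 1 ∧ Y p ≤ x} = Set.Icc 0 1 := by
      ext p; simp only [Set.mem_setOf_eq, and_iff_left_iff_imp]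
      exact fun _ => le_trans (hmem p).2 hx
    rw [Hinv, he, csSup_Icc zero_le_one]

lemma ginv_Hinv (hY : Monotone Y) (hmem : ∀ p, Y p ∈ Set.Icc a b)
    {p : ℝ} (hp : p ∈ Set.Ioc (0:ℝ) 1) (hcont : ContinuousAt Y p) :
    ginv a b (Hinv Y) p = Y p := by
  apply le_antisymm
  · exact ginv_le (hmem p) (le_csSup Hinv_bddAbove ⟨⟨hp.1.le, hp.2⟩, le_rfl⟩)
  · refine le_csInf ?_ ?_
    · exact ⟨Y p, hmem p, le_csSup Hinv_bddAbove ⟨⟨hp.1.le, hp.2⟩, le_rfl⟩⟩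
    rintro θ ⟨hθab, hθ⟩
    have hall : ∀ r ∈ Set.Ioo 0 p, Y r ≤ θ := fun r hr => Hinv_rle hY hθ hr.1.le hr.2
    have htend : Tendsto Y (nhdsWithin p (Set.Iio p)) (nhds (Y p)) :=
      (hcont.continuousWithinAt).tendsto
    exact le_of_tendsto htend (eventually_of_mem (Ioo_mem_nhdsLT_of_mem ⟨hp.1, le_rfl⟩) hall)

lemma integrableOn_comp (hab : a ≤ b) {V : ℝ → ℝ} (hV : ContinuousOn V (Set.Icc a b))
    {g : ℝ → ℝ} (hg : Monotone g) (hmem : ∀ p, g p ∈ Set.Icc a b) :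
    IntegrableOn (fun p => V (g p)) (Set.Icc (0:ℝ) 1) volume := by
  set Vt : ℝ → ℝ := fun x => V (max a (min b x)) with hVt
  have hVtc : Continuous Vt := by
    apply hV.comp_continuous (continuous_const.max (continuous_const.min continuous_id))
    intro x
    exact ⟨le_max_left _ _, max_le hab (min_le_left _ _)⟩
  have heq : (fun p => V (g p)) = fun p => Vt (g p) := by
    funext p
    have h1 : min b (g p) = g p := min_eq_right (hmem p).2
    have h2 : max a (g p) = g p := max_eq_right (hmem p).1
    simp [hVt, h1, h2]
  rw [heq]
  obtain ⟨C, hC⟩ := isCompact_Icc.exists_bound_of_continuousOn hV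
  apply Integrable.mono' (integrable_const C)
    ((hVtc.measurable.comp hg.measurable).aestronglyMeasurable)
  apply ae_of_all
  intro p
  exact hC _ ⟨le_max_left _ _, max_le hab (min_le_left _ _)⟩

end Aux16

open Aux16

/-- `H ∈ ℋ` maximizes `∫ V dH` over `ℋ` iff for almost all `p ∈ [0,1]`,
`H⁻¹(p)` maximizes `V` on `[H̄⁻¹(p), H̲⁻¹(p)]` (quantile representation of `∫ V dH`). -/
theorem optimal_iff_pointwise_argmax (a b q : ℝ) (hab : a < b)
    (hq : q ∈ Set.Ioo (0 : ℝ) 1) (F : ℝ → ℝ) (hF : IsCDF a b F)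
    (V : ℝ → ℝ) (hV : ContinuousOn V (Set.Icc a b))
    (H : ℝ → ℝ)
    (hH : IsCDF a b H ∧ ∀ x ∈ Set.Icc a b,
      max 0 ((F x - q) / (1 - q)) ≤ H x ∧ H x ≤ min (F x / q) 1) :
    (∀ H' : ℝ → ℝ, (IsCDF a b H' ∧ ∀ x ∈ Set.Icc a b,
        max 0 ((F x - q) / (1 - q)) ≤ H' x ∧ H' x ≤ min (F x / q) 1) →
      (∫ p in Set.Icc (0 : ℝ) 1, V (ginv a b H' p)) ≤
        ∫ p in Set.Icc (0 : ℝ) 1, V (ginv a b H p)) ↔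
    (∀ᵐ p ∂(volume.restrict (Set.Icc (0 : ℝ) 1)),
      ∀ y ∈ Set.Icc (ginv a b (fun z => min (F z / q) 1) p)
          (ginv a b (fun z => max 0 ((F z - q) / (1 - q))) p),
        V y ≤ V (ginv a b H p)) := by
  set Hu : ℝ → ℝ := fun z => min (F z / q) 1 with hHu
  set Hl : ℝ → ℝ := fun z => max 0 ((F z - q) / (1 - q)) with hHl
  have hcu : IsCDF a b Hu := isCDF_Hu hq hF
  have hcl : IsCDF a b Hl := isCDF_Hl hq hF
  have hlu : ∀ x, Hl x ≤ Hu x := Hl_le_Hu hq hF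
  -- extension of constraints to all of ℝ
  have hext : ∀ G : ℝ → ℝ, IsCDF a b G →
      (∀ x ∈ Set.Icc a b, Hl x ≤ G x ∧ G x ≤ Hu x) → ∀ x, Hl x ≤ G x ∧ G x ≤ Hu x := by
    intro G hG hc x
    rcases lt_or_ge x a with hxa | hax
    · rw [hG.2.2.1 x hxa, hcl.2.2.1 x hxa, hcu.2.2.1 x hxa]
      exact ⟨le_rfl, le_rfl⟩
    rcases le_or_gt x b with hxb | hbx
    · exact hc x ⟨hax, hxb⟩
    · rw [hG.2.2.2 x hbx.le, hcl.2.2.2 x hbx.le, hcu.2.2.2 x hbx.le]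
      exact ⟨le_rfl, le_rfl⟩
  -- clamped quantile envelopes
  set cl : ℝ → ℝ := fun p => max 0 (min 1 p) with hcldef
  have hcl01 : ∀ p, cl p ∈ Set.Icc (0:ℝ) 1 :=
    fun p => ⟨le_max_left _ _, max_le zero_le_one (min_le_left _ _)⟩
  have hcl_mono : Monotone cl := fun p p' h =>
    max_le_max le_rfl (min_le_min le_rfl h)
  have hcl_eq : ∀ p ∈ Set.Icc (0:ℝ) 1, cl p = p := by
    intro p hp
    simp only [hcldef]
    rw [min_eq_right hp.2, max_eq_right hp.1]
  set gu : ℝ → ℝ := fun p => ginv a b Hu (cl p) with hgu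
  set gl : ℝ → ℝ := fun p => ginv a b Hl (cl p) with hgl
  have hgu_mem : ∀ p, gu p ∈ Set.Icc a b := fun p => ginv_mem hab.le hcu (hcl01 p).2
  have hgl_mem : ∀ p, gl p ∈ Set.Icc a b := fun p => ginv_mem hab.le hcl (hcl01 p).2
  have hgugl : ∀ p, gu p ≤ gl p := fun p => ginv_anti hab.le hcl hlu (hcl01 p).2
  have hgu_mono : Monotone gu := fun p p' h => ginv_mono hab.le hcu (hcl_mono h) (hcl01 p').2
  have hgl_mono : Monotone gl := fun p p' h => ginv_mono hab.le hcl (hcl_mono h) (hcl01 p').2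
  have hgu_eq : ∀ p ∈ Set.Icc (0:ℝ) 1, gu p = ginv a b Hu p := by
    intro p hp
    show ginv a b Hu (cl p) = ginv a b Hu p
    rw [hcl_eq p hp]
  have hgl_eq : ∀ p ∈ Set.Icc (0:ℝ) 1, gl p = ginv a b Hl p := by
    intro p hp
    show ginv a b Hl (cl p) = ginv a b Hl p
    rw [hcl_eq p hp]
  have hIsub : ∀ p, Set.Icc (gu p) (gl p) ⊆ Set.Icc a b :=
    fun p => Set.Icc_subset_Icc (hgu_mem p).1 (hgl_mem p).2
  -- maximal argmax selection
  have hmax_ex : ∀ p, ∃ x ∈ Set.Icc (gu p) (gl p), IsMaxOn V (Set.Icc (gu p) (gl p)) x :=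
    fun p => isCompact_Icc.exists_isMaxOn (Set.nonempty_Icc.mpr (hgugl p)) (hV.mono (hIsub p))
  set A : ℝ → Set ℝ :=
    fun p => {x | x ∈ Set.Icc (gu p) (gl p) ∧ IsMaxOn V (Set.Icc (gu p) (gl p)) x} with hA
  set Y : ℝ → ℝ := fun p => sSup (A p) with hY
  have hYA : ∀ p, Y p ∈ A p := by
    intro p
    obtain ⟨x₀, hx₀I, hx₀max⟩ := hmax_ex p
    have hAeq : A p = Set.Icc (gu p) (gl p) ∩ V ⁻¹' Set.Ici (V x₀) := by
      ext x
      simp only [hA, Set.mem_setOf_eq, Set.mem_inter_iff, Set.mem_preimage, Set.mem_Ici]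
      constructor
      · rintro ⟨hxI, hxmax⟩
        exact ⟨hxI, isMaxOn_iff.1 hxmax x₀ hx₀I⟩
      · rintro ⟨hxI, hxV⟩
        exact ⟨hxI, isMaxOn_iff.2 fun z hz => le_trans (isMaxOn_iff.1 hx₀max z hz) hxV⟩
    have hclosed : IsClosed (A p) := by
      rw [hAeq]
      exact (hV.mono (hIsub p)).preimage_isClosed_of_isClosed isClosed_Icc isClosed_Ici
    have hcomp : IsCompact (A p) :=
      IsCompact.of_isClosed_subset isCompact_Icc hclosed (fun x hx => hx.1)
    have hne : (A p).Nonempty := ⟨x₀, hx₀I, hx₀max⟩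
    exact hcomp.sSup_mem hne
  have hYI : ∀ p, Y p ∈ Set.Icc (gu p) (gl p) := fun p => (hYA p).1
  have hYmax : ∀ p, IsMaxOn V (Set.Icc (gu p) (gl p)) (Y p) := fun p => (hYA p).2
  have hYmem : ∀ p, Y p ∈ Set.Icc a b := fun p => hIsub p (hYI p)
  have hYmono : Monotone Y := by
    intro p p' h
    by_contra hcon
    push_neg at hcon
    have h1 : Y p ∈ Set.Icc (gu p') (gl p') :=
      ⟨le_trans (hYI p').1 hcon.le, le_trans (hYI p).2 (hgl_mono h)⟩
    have h2 : Y p' ∈ Set.Icc (gu p) (gl p) :=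
      ⟨le_trans (hgu_mono h) (hYI p').1, le_trans hcon.le (hYI p).2⟩
    have h3 : V (Y p) ≤ V (Y p') := isMaxOn_iff.1 (hYmax p') _ h1
    have h4 : Y p ∈ A p' := by
      refine ⟨h1, isMaxOn_iff.2 fun z hz => ?_⟩
      exact le_trans (isMaxOn_iff.1 (hYmax p') z hz) (isMaxOn_iff.1 (hYmax p) _ h2)
    have h5 : Y p ≤ Y p' := le_csSup ⟨gl p', fun x hx => hx.1.2⟩ h4
    exact absurd h5 (not_le.mpr hcon)
  -- the candidate optimal CDF
  have hH'cdf : IsCDF a b (Hinv Y) := isCDF_Hinv hYmono hYmem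
  have hH'mem : ∀ x ∈ Set.Icc a b, Hl x ≤ Hinv Y x ∧ Hinv Y x ≤ Hu x := by
    intro x hx
    constructor
    · apply le_csSup Hinv_bddAbove
      refine ⟨⟨cdf_nonneg hcl x, cdf_le_one hcl x⟩, ?_⟩
      have h1 : Y (Hl x) ≤ gl (Hl x) := (hYI _).2
      have h2 : gl (Hl x) = ginv a b Hl (Hl x) :=
        hgl_eq _ ⟨cdf_nonneg hcl x, cdf_le_one hcl x⟩
      exact le_trans h1 (h2 ▸ ginv_le hx le_rfl)
    · apply Real.sSup_le _ (cdf_nonneg hcu x)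
      rintro p ⟨hp01, hpY⟩
      have h1 : ginv a b Hu p ≤ Y p := by
        rw [← hgu_eq p hp01]
        exact (hYI p).1
      have h2 : ginv a b Hu p ≤ x := le_trans h1 hpY
      exact le_trans (le_apply_ginv hab.le hcu hp01.2) (hcu.1 h2)
  -- integrability
  have hInt : ∀ G : ℝ → ℝ, IsCDF a b G →
      IntegrableOn (fun p => V (ginv a b G p)) (Set.Icc (0:ℝ) 1) volume := by
    intro G hG
    have hg_mono : Monotone (fun p => ginv a b G (cl p)) :=
      fun p p' h => ginv_mono hab.le hG (hcl_mono h) (hcl01 p').2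
    have hg_mem : ∀ p, ginv a b G (cl p) ∈ Set.Icc a b :=
      fun p => ginv_mem hab.le hG (hcl01 p).2
    have := integrableOn_comp hab.le hV hg_mono hg_mem
    apply this.congr_fun _ measurableSet_Icc
    intro p hp
    show V (ginv a b G (cl p)) = V (ginv a b G p)
    rw [hcl_eq p hp]
  have hIntY : IntegrableOn (fun p => V (Y p)) (Set.Icc (0:ℝ) 1) volume :=
    integrableOn_comp hab.le hV hYmono hYmem
  -- domination: for any admissible G and p ∈ [0,1], ginv G p lies in the interval
  have hdom : ∀ (G : ℝ → ℝ), IsCDF a b G → (∀ x, Hl x ≤ G x ∧ G x ≤ Hu x) →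
      ∀ p ∈ Set.Icc (0:ℝ) 1, ginv a b G p ∈ Set.Icc (gu p) (gl p) := by
    intro G hG hGc p hp
    constructor
    · rw [hgu_eq p hp]
      exact ginv_anti hab.le hG (fun x => (hGc x).2) hp.2
    · rw [hgl_eq p hp]
      exact ginv_anti hab.le hcl (fun x => (hGc x).1) hp.2
  -- a.e. identification of ginv (Hinv Y) with Y
  have hae_eq : ∀ᵐ p ∂(volume.restrict (Set.Icc (0:ℝ) 1)), ginv a b (Hinv Y) p = Y p := by
    have hcnt : {p : ℝ | ¬ContinuousAt Y p}.Countable := hYmono.countable_not_continuousAt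
    have h1 : ∀ᵐ p ∂(volume : Measure ℝ), ContinuousAt Y p := by
      rw [ae_iff]
      exact measure_mono_null (fun p hp => hp) (hcnt.measure_zero _)
    have h2 : ∀ᵐ p ∂(volume : Measure ℝ), p ≠ 0 := by
      rw [ae_iff]
      exact measure_mono_null
        (fun p hp => show p ∈ ({0} : Set ℝ) by simpa using hp) (measure_singleton 0)
    filter_upwards [ae_restrict_mem measurableSet_Icc, ae_restrict_of_ae h1,
      ae_restrict_of_ae h2] with p hp hc hne
    exact ginv_Hinv hYmono hYmem ⟨lt_of_le_of_ne hp.1 (Ne.symm hne), hp.2⟩ hc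
  constructor
  · -- optimality implies a.e. pointwise argmax
    intro hopt
    have h1 := hopt (Hinv Y) ⟨hH'cdf, fun x hx => hH'mem x hx⟩
    have h2 : (∫ p in Set.Icc (0:ℝ) 1, V (ginv a b (Hinv Y) p)) =
        ∫ p in Set.Icc (0:ℝ) 1, V (Y p) :=
      integral_congr_ae (hae_eq.mono fun p hp => by
        show V (ginv a b (Hinv Y) p) = V (Y p)
        rw [hp])
    rw [h2] at h1
    -- pointwise: V (ginv H p) ≤ V (Y p) on [0,1]
    have h3 : ∀ p ∈ Set.Icc (0:ℝ) 1, V (ginv a b H p) ≤ V (Y p) := by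
      intro p hp
      exact isMaxOn_iff.1 (hYmax p) _ (hdom H hH.1 (hext H hH.1 hH.2) p hp)
    have hIntH := hInt H hH.1
    have h4 : (∫ p in Set.Icc (0:ℝ) 1, (V (Y p) - V (ginv a b H p))) = 0 := by
      rw [integral_sub hIntY hIntH]
      have h5 : (∫ p in Set.Icc (0:ℝ) 1, V (ginv a b H p)) ≤
          ∫ p in Set.Icc (0:ℝ) 1, V (Y p) := by
        apply integral_mono_ae hIntH hIntY
        filter_upwards [ae_restrict_mem measurableSet_Icc] with p hp
        exact h3 p hp
      linarith
    have h6 : (fun p => V (Y p) - V (ginv a b H p))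
        =ᵐ[volume.restrict (Set.Icc (0:ℝ) 1)] 0 := by
      have hnn : 0 ≤ᵐ[volume.restrict (Set.Icc (0:ℝ) 1)]
          fun p => V (Y p) - V (ginv a b H p) := by
        filter_upwards [ae_restrict_mem measurableSet_Icc] with p hp
        exact sub_nonneg.mpr (h3 p hp)
      exact (integral_eq_zero_iff_of_nonneg_ae hnn (hIntY.sub hIntH)).mp h4
    filter_upwards [h6, ae_restrict_mem measurableSet_Icc] with p hp0 hpmem
    intro y hy
    have hVeq : V (Y p) = V (ginv a b H p) := by
      have := hp0
      simp only [Pi.zero_apply] at this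
      linarith [this]
    have hyI : y ∈ Set.Icc (gu p) (gl p) := by
      refine ⟨?_, ?_⟩
      · rw [hgu_eq p hpmem]; exact hy.1
      · rw [hgl_eq p hpmem]; exact hy.2
    calc V y ≤ V (Y p) := isMaxOn_iff.1 (hYmax p) _ hyI
      _ = V (ginv a b H p) := hVeq
  · -- a.e. pointwise argmax implies optimality
    intro hae H' ⟨hc', hm'⟩
    apply integral_mono_ae (hInt H' hc') (hInt H hH.1)
    filter_upwards [hae, ae_restrict_mem measurableSet_Icc] with p hp hpmem
    have hmem' := hdom H' hc' (hext H' hc' hm') p hpmem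
    apply hp
    constructor
    · rw [← hgu_eq p hpmem]; exact hmem'.1
    · rw [← hgl_eq p hpmem]; exact hmem'.2
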